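/- arXiv:1110.3069 — 3 statements merged into one kernel-verified Lean document; each statement's English description precedes it below -/
import Mathlib

section
/- Slepian-Wolf-minus-D region (single-letter form of Theorem 4): let Y1, Y2 be finitely-valued random variables and set X = (Y1,Y2). Then real numbers (R1,R2,D) admit finitely-valued auxiliary random variables U1, U2, Q jointly distributed with (Y1,Y2) — with Q independent of (Y1,Y2), U1 conditionally independent of (Y2,U2) given (Y1,Q), and U2 conditionally independent of (Y1,U1) given (Y2,Q) — satisfying R1 ≥ I(Y1;U1|X,Q) + H(X|U2,Q) − D, R2 ≥ I(Y2;U2|X,Q) + H(X|U1,Q) − D, R1+R2 ≥ I(U1;Y1|X,Q) + I(U2;Y2|X,Q) + H(X) − D, and D ≥ H(X|U1,U2,Q), if and only if R1 ≥ H(Y1|Y2) − D, R2 ≥ H(Y2|Y1) − D, R1+R2 ≥ H(Y1,Y2) − D, and D ≥ 0. -/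
open scoped BigOperators Classical

noncomputable section

/-- Probability that the random variable `A` takes the value `a` under the pmf `p`. -/
def pr {Ω α : Type*} [Fintype Ω] (p : Ω → ℝ) (A : Ω → α) (a : α) : ℝ :=
  ∑ ω, if A ω = a then p ω else 0

/-- Shannon entropy (base 2) of the random variable `A` under the pmf `p`. -/
def ent {Ω α : Type*} [Fintype Ω] [Fintype α] (p : Ω → ℝ) (A : Ω → α) : ℝ :=
  -∑ a, pr p A a * Real.logb 2 (pr p A a)

/-- Conditional Shannon entropy `H(A | B)` (base 2). -/
def condEnt {Ω α β : Type*} [Fintype Ω] [Fintype α] [Fintype β]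
    (p : Ω → ℝ) (A : Ω → α) (B : Ω → β) : ℝ :=
  ent p (fun ω => (A ω, B ω)) - ent p B

/-- Mutual information `I(A ; B)` (base 2). -/
def mutInfo {Ω α β : Type*} [Fintype Ω] [Fintype α] [Fintype β]
    (p : Ω → ℝ) (A : Ω → α) (B : Ω → β) : ℝ :=
  ent p A + ent p B - ent p (fun ω => (A ω, B ω))

/-- Conditional mutual information `I(A ; B | C)` (base 2). -/
def condMutInfo {Ω α β γ : Type*} [Fintype Ω] [Fintype α] [Fintype β] [Fintype γ]
    (p : Ω → ℝ) (A : Ω → α) (B : Ω → β) (C : Ω → γ) : ℝ :=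
  ent p (fun ω => (A ω, C ω)) + ent p (fun ω => (B ω, C ω))
    - ent p (fun ω => (A ω, B ω, C ω)) - ent p C

/-- `p` is a probability mass function on the finite type `Ω`. -/
def IsPmf {Ω : Type*} [Fintype Ω] (p : Ω → ℝ) : Prop :=
  (∀ ω, 0 ≤ p ω) ∧ (∑ ω, p ω) = 1

/-- `k` is a transition kernel: each `k q y` is a pmf on `U`. -/
def IsKernel {Q Y U : Type*} [Fintype U] (k : Q → Y → U → ℝ) : Prop :=
  (∀ q y u, 0 ≤ k q y u) ∧ ∀ q y, (∑ u, k q y u) = 1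

/-- Independence of the random variables `A` and `B` under `p`. -/
def Indep {Ω α β : Type*} [Fintype Ω] (p : Ω → ℝ) (A : Ω → α) (B : Ω → β) : Prop :=
  ∀ a b, pr p (fun ω => (A ω, B ω)) (a, b) = pr p A a * pr p B b

/-- Conditional independence of `A` and `B` given `C` under `p`
(stated in a division-free form). -/
def CondIndep {Ω α β γ : Type*} [Fintype Ω] (p : Ω → ℝ) (A : Ω → α) (B : Ω → β)
    (C : Ω → γ) : Prop :=
  ∀ a b c, pr p (fun ω => (A ω, B ω, C ω)) (a, b, c) * pr p C c =
    pr p (fun ω => (A ω, C ω)) (a, c) * pr p (fun ω => (B ω, C ω)) (b, c)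

/-- The joint pmf `p(q) p(y1,y2) p(u1|y1,q) p(u2|y2,q)` on `Q × Y1 × Y2 × U1 × U2`. -/
def jointW {Y1 Y2 Q U1 U2 : Type*} (src : Y1 × Y2 → ℝ) (pq : Q → ℝ)
    (k1 : Q → Y1 → U1 → ℝ) (k2 : Q → Y2 → U2 → ℝ) : Q × Y1 × Y2 × U1 × U2 → ℝ :=
  fun z => pq z.1 * src (z.2.1, z.2.2.1) * k1 z.1 z.2.1 z.2.2.2.1 * k2 z.1 z.2.2.1 z.2.2.2.2

/-- The joint pmf `p(q) p(x,y1,y2) p(u1|y1,q) p(u2|y2,q)` on `Q × X × Y1 × Y2 × U1 × U2`. -/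
def ceoJoint {X Y1 Y2 Q U1 U2 : Type*} (src : X × Y1 × Y2 → ℝ) (pq : Q → ℝ)
    (k1 : Q → Y1 → U1 → ℝ) (k2 : Q → Y2 → U2 → ℝ) : Q × X × Y1 × Y2 × U1 × U2 → ℝ :=
  fun z => pq z.1 * src (z.2.1, z.2.2.1, z.2.2.2.1) *
    k1 z.1 z.2.2.1 z.2.2.2.2.1 * k2 z.1 z.2.2.2.1 z.2.2.2.2.2

/-- Pmf of `n` i.i.d. copies of a pair source. -/
def iidPmf {Y1 Y2 : Type*} (src : Y1 × Y2 → ℝ) (n : ℕ) :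
    (Fin n → Y1) × (Fin n → Y2) → ℝ :=
  fun y => ∏ j, src (y.1 j, y.2 j)

/-- Pmf of `n` i.i.d. copies of a triple source. -/
def ceoIidPmf {X Y1 Y2 : Type*} (src : X × Y1 × Y2 → ℝ) (n : ℕ) :
    (Fin n → X) × (Fin n → Y1) × (Fin n → Y2) → ℝ :=
  fun z => ∏ j, src (z.1 j, z.2.1 j, z.2.2 j)

/-!
Each term `I(Yᵢ;Uᵢ|X,Q)` vanishes identically, since `Yᵢ` is a coordinate of `X`. Because `Q` is
independent of the source and `U₂` is produced from `(Y₂,Q)` alone, `Y₁` is conditionally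
independent of `(U₂,Q)` given `Y₂`, hence `H(X|U₂,Q) ≥ H(Y₁|Y₂,U₂,Q) = H(Y₁|Y₂)`; symmetrically
`H(X|U₁,Q) ≥ H(Y₂|Y₁)`, and `H(X|U₁,U₂,Q) ≥ 0`. Conversely, a constant `Q` with noiseless
encoders `Uᵢ = Yᵢ` turns all these inequalities into equalities.
-/

section Marginals

variable {Ω α β γ : Type*} [Fintype Ω] (p : Ω → ℝ)

theorem le_pr_self {p : Ω → ℝ} (hp : ∀ ω, 0 ≤ p ω) (A : Ω → α) (ω : Ω) :
    p ω ≤ pr p A (A ω) := by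
  simpa [pr] using Finset.single_le_sum (f := fun ω' => if A ω' = A ω then p ω' else 0)
    (fun ω' _ => by split_ifs <;> [exact hp ω'; exact le_rfl]) (Finset.mem_univ ω)

theorem pr_self_pos {p : Ω → ℝ} (hp : ∀ ω, 0 ≤ p ω) {ω : Ω} (h0 : 0 < p ω) (A : Ω → α) :
    0 < pr p A (A ω) :=
  h0.trans_le (le_pr_self hp A ω)

theorem pr_le_pr_of_imp {p : Ω → ℝ} (hp : ∀ ω, 0 ≤ p ω) {A : Ω → α} {B : Ω → β} {a : α}
    {b : β} (h : ∀ ω, A ω = a → B ω = b) : pr p A a ≤ pr p B b :=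
  Finset.sum_le_sum fun ω _ => by
    by_cases hA : A ω = a
    · simp [hA, h ω hA]
    · simp only [hA, if_false]; split_ifs <;> [exact hp ω; exact le_rfl]

theorem sum_pr_mul [Fintype α] (A : Ω → α) (g : α → ℝ) :
    ∑ a, pr p A a * g a = ∑ ω, p ω * g (A ω) := by
  simp only [pr, Finset.sum_mul, ite_mul, zero_mul]
  rw [Finset.sum_comm]
  simp

theorem sum_pr_prod_fst [Fintype α] (A : Ω → α) (B : Ω → β) (b : β) :
    ∑ a, pr p (fun ω => (A ω, B ω)) (a, b) = pr p B b := by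
  simp only [pr, Prod.mk.injEq, ite_and]
  rw [Finset.sum_comm]
  simp

theorem sum_pr_prod_mid [Fintype β] (A : Ω → α) (B : Ω → β) (C : Ω → γ) (a : α) (c : γ) :
    ∑ b, pr p (fun ω => (A ω, B ω, C ω)) (a, b, c) = pr p (fun ω => (A ω, C ω)) (a, c) := by
  simp only [pr, Prod.mk.injEq, ite_and]
  rw [Finset.sum_comm]
  simp

theorem pr_comp [Fintype α] (A : Ω → α) (f : α → β) (b : β) :
    pr p (fun ω => f (A ω)) b = pr (pr p A) f b := by
  have h := sum_pr_mul p A fun a => if f a = b then (1 : ℝ) else 0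
  simp only [mul_ite, mul_one, mul_zero] at h
  exact h.symm

theorem pr_comp_injective {A : Ω → α} {e : α → β} (he : e.Injective) (a : α) :
    pr p (fun ω => e (A ω)) (e a) = pr p A a := by
  simp only [pr, he.eq_iff]

theorem condIndep_of_pr_eq_mul [Fintype α] [Fintype β] {A : Ω → α} {B : Ω → β} {C : Ω → γ}
    (f : α × γ → ℝ) (g : β × γ → ℝ)
    (h : ∀ a b c, pr p (fun ω => (A ω, B ω, C ω)) (a, b, c) = f (a, c) * g (b, c)) :
    CondIndep p A B C := by
  intro a b c
  have hAC : pr p (fun ω => (A ω, C ω)) (a, c) = f (a, c) * ∑ b, g (b, c) := by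
    rw [← sum_pr_prod_mid p A B C, Finset.mul_sum]
    simp only [h]
  have hBC : ∀ b, pr p (fun ω => (B ω, C ω)) (b, c) = (∑ a, f (a, c)) * g (b, c) := by
    intro b
    rw [← sum_pr_prod_fst p A (fun ω => (B ω, C ω)), Finset.sum_mul]
    simp only [h]
  have hC : pr p C c = (∑ a, f (a, c)) * ∑ b, g (b, c) := by
    rw [← sum_pr_prod_fst p B C, Finset.mul_sum]
    simp only [hBC]
  rw [h, hAC, hBC, hC]
  ring

end Marginals

section Entropy

variable {Ω α β γ : Type*} [Fintype Ω] [Fintype α] [Fintype β] [Fintype γ] (p : Ω → ℝ)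

theorem ent_eq_neg_sum (A : Ω → α) : ent p A = -∑ ω, p ω * Real.logb 2 (pr p A (A ω)) := by
  rw [ent, sum_pr_mul]

theorem ent_comp (A : Ω → α) (f : α → β) : ent p (fun ω => f (A ω)) = ent (pr p A) f := by
  simp only [ent, pr_comp p A f]

theorem condEnt_comp (A : Ω → α) (f : α → β) (g : α → γ) :
    condEnt p (fun ω => f (A ω)) (fun ω => g (A ω)) = condEnt (pr p A) f g :=
  congrArg₂ (· - ·) (ent_comp p A fun a => (f a, g a)) (ent_comp p A g)

theorem ent_comp_injective (A : Ω → α) {e : α → β} (he : e.Injective) :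
    ent p (fun ω => e (A ω)) = ent p A := by
  have hzero : ∀ b ∉ Set.range e, pr p (fun ω => e (A ω)) b = 0 := fun b hb =>
    Finset.sum_eq_zero fun ω _ => if_neg fun h => hb ⟨A ω, h⟩
  rw [ent, ent, neg_inj]
  refine (Fintype.sum_of_injective e he _ _ (fun b hb => by simp [hzero b hb]) fun a => ?_).symm
  rw [pr_comp_injective p he]

theorem ent_prod_comm (A : Ω → α) (B : Ω → β) :
    ent p (fun ω => (B ω, A ω)) = ent p (fun ω => (A ω, B ω)) :=
  ent_comp_injective p (fun ω => (A ω, B ω)) Prod.swap_injective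

theorem ent_prod_eq_of_eq_comp {A : Ω → α} (B : Ω → β) {f : β → α}
    (hA : ∀ ω, A ω = f (B ω)) : ent p (fun ω => (A ω, B ω)) = ent p B := by
  simp only [hA]
  exact ent_comp_injective p B (e := fun b => (f b, b)) fun b b' h => congrArg Prod.snd h

theorem ent_le_ent_prod {p : Ω → ℝ} (hp : ∀ ω, 0 ≤ p ω) (A : Ω → α) (B : Ω → β) :
    ent p B ≤ ent p (fun ω => (A ω, B ω)) := by
  rw [ent_eq_neg_sum, ent_eq_neg_sum, neg_le_neg_iff]
  refine Finset.sum_le_sum fun ω _ => ?_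
  rcases (hp ω).eq_or_lt with h0 | h0
  · simp [← h0]
  refine mul_le_mul_of_nonneg_left (Real.logb_le_logb_of_le one_lt_two ?_ ?_) (hp ω)
  · exact h0.trans_le (le_pr_self hp _ ω)
  · exact pr_le_pr_of_imp hp fun ω' h => (Prod.mk.inj h).2

theorem condEnt_nonneg {p : Ω → ℝ} (hp : ∀ ω, 0 ≤ p ω) (A : Ω → α) (B : Ω → β) :
    0 ≤ condEnt p A B :=
  sub_nonneg.2 (ent_le_ent_prod hp A B)

theorem condEnt_comp_injective_eq_zero (A : Ω → α) {e : α → β} (he : e.Injective) :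
    condEnt p A (fun ω => e (A ω)) = 0 := by
  rw [condEnt, ent_comp_injective p A he,
    ent_comp_injective p A (e := fun a => (a, e a)) fun a a' h => congrArg Prod.fst h, sub_self]

theorem condEnt_prod_comm (A : Ω → α) (B : Ω → β) (C : Ω → γ) :
    condEnt p (fun ω => (B ω, A ω)) C = condEnt p (fun ω => (A ω, B ω)) C :=
  congrArg (· - ent p C) <| ent_comp_injective p (fun ω => ((A ω, B ω), C ω))
    (Prod.swap_injective.prodMap Function.injective_id)

theorem condEnt_prod_comp_injective (A : Ω → α) (B : Ω → β) {e : β → γ} (he : e.Injective) :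
    condEnt p (fun ω => (A ω, B ω)) (fun ω => e (B ω)) = condEnt p A B := by
  rw [condEnt, condEnt, ent_comp_injective p B he,
    ent_prod_comm p (fun ω => e (B ω)) (fun ω => (A ω, B ω)),
    ent_prod_eq_of_eq_comp p (fun ω => (A ω, B ω)) (f := fun x => e x.2) fun _ => rfl]

end Entropy

section MutualInformation

variable {Ω α β γ : Type*} [Fintype Ω] [Fintype α] [Fintype β] [Fintype γ] (p : Ω → ℝ)

theorem condMutInfo_comm (A : Ω → α) (B : Ω → β) (C : Ω → γ) :
    condMutInfo p B A C = condMutInfo p A B C := by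
  have hswap : ent p (fun ω => (B ω, A ω, C ω)) = ent p (fun ω => (A ω, B ω, C ω)) :=
    ent_comp_injective p (fun ω => (A ω, B ω, C ω)) (e := fun x => (x.2.1, x.1, x.2.2))
      fun x y h => by simp only [Prod.mk.injEq] at h; exact Prod.ext h.2.1 (Prod.ext h.1 h.2.2)
  rw [condMutInfo, condMutInfo, hswap]
  ring

theorem condMutInfo_eq_zero_of_eq_comp {A : Ω → α} (B : Ω → β) (C : Ω → γ) {f : γ → α}
    (hA : ∀ ω, A ω = f (C ω)) : condMutInfo p A B C = 0 := by
  rw [condMutInfo, ent_prod_eq_of_eq_comp p C hA,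
    ent_prod_eq_of_eq_comp p (fun ω => (B ω, C ω)) (f := fun x => f x.2) hA]
  ring

theorem condMutInfo_eq_zero_of_condIndep {p : Ω → ℝ} (hp : ∀ ω, 0 ≤ p ω) {A : Ω → α}
    {B : Ω → β} {C : Ω → γ} (h : CondIndep p A B C) : condMutInfo p A B C = 0 := by
  have hterm : ∀ ω, p ω * Real.logb 2 (pr p (fun ω => (A ω, C ω)) (A ω, C ω))
      + p ω * Real.logb 2 (pr p (fun ω => (B ω, C ω)) (B ω, C ω))
      = p ω * Real.logb 2 (pr p (fun ω => (A ω, B ω, C ω)) (A ω, B ω, C ω))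
      + p ω * Real.logb 2 (pr p C (C ω)) := by
    intro ω
    rcases (hp ω).eq_or_lt with h0 | h0
    · simp [← h0]
    have hAC := (pr_self_pos hp h0 fun ω => (A ω, C ω)).ne'
    have hBC := (pr_self_pos hp h0 fun ω => (B ω, C ω)).ne'
    have hABC := (pr_self_pos hp h0 fun ω => (A ω, B ω, C ω)).ne'
    have hC := (pr_self_pos hp h0 C).ne'
    rw [← mul_add, ← mul_add, ← Real.logb_mul hAC hBC, ← Real.logb_mul hABC hC,
      h (A ω) (B ω) (C ω)]
  have hsum := Finset.sum_congr rfl fun ω (_ : ω ∈ Finset.univ) => hterm ω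
  simp only [Finset.sum_add_distrib] at hsum
  simp only [condMutInfo, ent_eq_neg_sum]
  linarith

theorem condEnt_le_condEnt_prod_of_condIndep {p : Ω → ℝ} (hp : ∀ ω, 0 ≤ p ω) {A : Ω → α}
    {V : Ω → β} {B : Ω → γ} (h : CondIndep p A V B) :
    condEnt p A B ≤ condEnt p (fun ω => (A ω, B ω)) V := by
  have hindep := condMutInfo_eq_zero_of_condIndep hp h
  have hperm : ent p (fun ω => ((A ω, B ω), V ω)) = ent p (fun ω => (A ω, V ω, B ω)) :=
    ent_comp_injective p (fun ω => (A ω, V ω, B ω)) (e := fun x => ((x.1, x.2.2), x.2.1))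
      fun x y h => by simp only [Prod.mk.injEq] at h; exact Prod.ext h.1.1 (Prod.ext h.2 h.1.2)
  have hmono : ent p V ≤ ent p (fun ω => (V ω, B ω)) :=
    (ent_le_ent_prod hp B V).trans_eq (ent_prod_comm p V B)
  rw [condMutInfo] at hindep
  rw [condEnt, condEnt, hperm]
  linarith

end MutualInformation

section SourceCoding

variable {Y1 Y2 Q U1 U2 : Type*} (src : Y1 × Y2 → ℝ) {pq : Q → ℝ} {k1 : Q → Y1 → U1 → ℝ}
  {k2 : Q → Y2 → U2 → ℝ}

theorem jointW_nonneg (hsrc : ∀ y, 0 ≤ src y) (hq : ∀ q, 0 ≤ pq q)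
    (hk1 : ∀ q y u, 0 ≤ k1 q y u) (hk2 : ∀ q y u, 0 ≤ k2 q y u) (z : Q × Y1 × Y2 × U1 × U2) :
    0 ≤ jointW src pq k1 k2 z :=
  mul_nonneg (mul_nonneg (mul_nonneg (hq _) (hsrc _)) (hk1 _ _ _)) (hk2 _ _ _)

variable [Fintype Y1] [Fintype Y2] [Fintype Q] [Fintype U1] [Fintype U2]

theorem pr_jointW_source (hq : ∑ q, pq q = 1) (hk1 : ∀ q y, ∑ u, k1 q y u = 1)
    (hk2 : ∀ q y, ∑ u, k2 q y u = 1) :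
    pr (jointW src pq k1 k2) (fun z => (z.2.1, z.2.2.1)) = src := by
  funext ⟨y1, y2⟩
  simp only [pr, jointW, Fintype.sum_prod_type, Prod.mk.injEq, ite_and]
  simp [← Finset.mul_sum, ← Finset.sum_mul, hk1, hk2, hq]

theorem ent_jointW_source (hq : ∑ q, pq q = 1) (hk1 : ∀ q y, ∑ u, k1 q y u = 1)
    (hk2 : ∀ q y, ∑ u, k2 q y u = 1) :
    ent (jointW src pq k1 k2) (fun z => (z.2.1, z.2.2.1)) = ent src id :=
  (ent_comp _ _ id).trans (congrArg (ent · id) (pr_jointW_source src hq hk1 hk2))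

theorem condMutInfo_source_fst_eq_zero {β : Type*} [Fintype β]
    (p : Q × Y1 × Y2 × U1 × U2 → ℝ) (B : Q × Y1 × Y2 × U1 × U2 → β) :
    condMutInfo p (fun z => z.2.1) B (fun z => ((z.2.1, z.2.2.1), z.1)) = 0 :=
  condMutInfo_eq_zero_of_eq_comp p B _ (f := fun x => x.1.1) fun _ => rfl

theorem condMutInfo_source_snd_eq_zero {β : Type*} [Fintype β]
    (p : Q × Y1 × Y2 × U1 × U2 → ℝ) (B : Q × Y1 × Y2 × U1 × U2 → β) :
    condMutInfo p (fun z => z.2.2.1) B (fun z => ((z.2.1, z.2.2.1), z.1)) = 0 :=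
  condMutInfo_eq_zero_of_eq_comp p B _ (f := fun x => x.1.2) fun _ => rfl

theorem condEnt_jointW_comp_source {α β : Type*} [Fintype α] [Fintype β]
    (hq : ∑ q, pq q = 1) (hk1 : ∀ q y, ∑ u, k1 q y u = 1) (hk2 : ∀ q y, ∑ u, k2 q y u = 1)
    (f : Y1 × Y2 → α) (g : Y1 × Y2 → β) :
    condEnt (jointW src pq k1 k2) (fun z => f (z.2.1, z.2.2.1)) (fun z => g (z.2.1, z.2.2.1)) =
      condEnt src f g :=
  (condEnt_comp _ _ f g).trans (by rw [pr_jointW_source src hq hk1 hk2])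

theorem condIndep_jointW_fst (hk1 : ∀ q y, ∑ u, k1 q y u = 1) :
    CondIndep (jointW src pq k1 k2) (fun z => z.2.1) (fun z => (z.2.2.2.2, z.1))
      (fun z => z.2.2.1) := by
  refine condIndep_of_pr_eq_mul _ src (fun x => pq x.1.2 * k2 x.1.2 x.2 x.1.1) ?_
  rintro y1 ⟨u2, q⟩ y2
  simp only [pr, jointW, Fintype.sum_prod_type, Prod.mk.injEq, ite_and]
  simp [← Finset.mul_sum, ← Finset.sum_mul, hk1]
  ring

theorem condIndep_jointW_snd (hk2 : ∀ q y, ∑ u, k2 q y u = 1) :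
    CondIndep (jointW src pq k1 k2) (fun z => z.2.2.1) (fun z => (z.2.2.2.1, z.1))
      (fun z => z.2.1) := by
  refine condIndep_of_pr_eq_mul _ (fun y => src y.swap)
    (fun x => pq x.1.2 * k1 x.1.2 x.2 x.1.1) ?_
  rintro y2 ⟨u1, q⟩ y1
  simp only [pr, jointW, Fintype.sum_prod_type, Prod.mk.injEq, ite_and]
  simp [← Finset.mul_sum, hk2]
  ring

theorem condEnt_source_le_condEnt_jointW_fst (hsrc : ∀ y, 0 ≤ src y) (hq0 : ∀ q, 0 ≤ pq q)
    (hq : ∑ q, pq q = 1) (hk1 : IsKernel k1) (hk2 : IsKernel k2) :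
    condEnt src Prod.fst Prod.snd ≤
      condEnt (jointW src pq k1 k2) (fun z => (z.2.1, z.2.2.1)) (fun z => (z.2.2.2.2, z.1)) :=
  calc condEnt src Prod.fst Prod.snd
      = condEnt (jointW src pq k1 k2) (fun z => z.2.1) (fun z => z.2.2.1) :=
        (condEnt_jointW_comp_source src hq hk1.2 hk2.2 Prod.fst Prod.snd).symm
    _ ≤ _ := condEnt_le_condEnt_prod_of_condIndep (jointW_nonneg src hsrc hq0 hk1.1 hk2.1)
        (condIndep_jointW_fst src hk1.2)

theorem condEnt_source_le_condEnt_jointW_snd (hsrc : ∀ y, 0 ≤ src y) (hq0 : ∀ q, 0 ≤ pq q)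
    (hq : ∑ q, pq q = 1) (hk1 : IsKernel k1) (hk2 : IsKernel k2) :
    condEnt src Prod.snd Prod.fst ≤
      condEnt (jointW src pq k1 k2) (fun z => (z.2.1, z.2.2.1)) (fun z => (z.2.2.2.1, z.1)) :=
  calc condEnt src Prod.snd Prod.fst
      = condEnt (jointW src pq k1 k2) (fun z => z.2.2.1) (fun z => z.2.1) :=
        (condEnt_jointW_comp_source src hq hk1.2 hk2.2 Prod.snd Prod.fst).symm
    _ ≤ _ := condEnt_le_condEnt_prod_of_condIndep (jointW_nonneg src hsrc hq0 hk1.1 hk2.1)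
        (condIndep_jointW_snd src hk2.2)
    _ = _ := condEnt_prod_comm _ _ _ _

end SourceCoding

section Deterministic

def detKernel {Q Y U : Type*} (e : Y → U) : Q → Y → U → ℝ :=
  fun _ y u => if u = e y then 1 else 0

theorem isKernel_detKernel {Q Y U : Type*} [Fintype U] (e : Y → U) :
    IsKernel (detKernel (Q := Q) e) :=
  ⟨fun _ _ _ => by unfold detKernel; positivity, fun _ _ => by simp [detKernel]⟩

variable {Y1 Y2 Q U1 U2 : Type*} [Fintype Y1] [Fintype Y2] [Unique Q] (src : Y1 × Y2 → ℝ)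

theorem jointW_detKernel (e1 : Y1 → U1) (e2 : Y2 → U2) :
    jointW src (fun _ : Q => 1) (detKernel e1) (detKernel e2) =
      pr src fun y => ((default : Q), y.1, y.2, e1 y.1, e2 y.2) := by
  funext ⟨q, y1, y2, u1, u2⟩
  rw [pr, Fintype.sum_eq_single (y1, y2)]
  · simp [jointW, detKernel, Unique.eq_default q, eq_comm, ite_and]
    split_ifs <;> rfl
  · intro y hy
    simp_all [Prod.ext_iff]

variable [Fintype Q] [Fintype U1] [Fintype U2] {e1 : Y1 → U1} {e2 : Y2 → U2}

theorem condEnt_jointW_detKernel_fst (he2 : e2.Injective) :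
    condEnt (jointW src (fun _ : Q => 1) (detKernel e1) (detKernel e2))
      (fun z => (z.2.1, z.2.2.1)) (fun z => (z.2.2.2.2, z.1)) =
      condEnt src Prod.fst Prod.snd := by
  rw [jointW_detKernel, ← condEnt_comp]
  exact condEnt_prod_comp_injective src Prod.fst Prod.snd (e := fun b => (e2 b, (default : Q)))
    fun b b' h => he2 (Prod.mk.inj h).1

theorem condEnt_jointW_detKernel_snd (he1 : e1.Injective) :
    condEnt (jointW src (fun _ : Q => 1) (detKernel e1) (detKernel e2))
      (fun z => (z.2.1, z.2.2.1)) (fun z => (z.2.2.2.1, z.1)) =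
      condEnt src Prod.snd Prod.fst := by
  rw [jointW_detKernel, ← condEnt_comp]
  exact (condEnt_prod_comm src Prod.snd Prod.fst _).trans
    (condEnt_prod_comp_injective src Prod.snd Prod.fst (e := fun b => (e1 b, (default : Q)))
      fun b b' h => he1 (Prod.mk.inj h).1)

theorem condEnt_jointW_detKernel_eq_zero (he1 : e1.Injective) (he2 : e2.Injective) :
    condEnt (jointW src (fun _ : Q => 1) (detKernel e1) (detKernel e2))
      (fun z => (z.2.1, z.2.2.1)) (fun z => (z.2.2.2.1, z.2.2.2.2, z.1)) = 0 := by
  rw [jointW_detKernel, ← condEnt_comp]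
  exact condEnt_comp_injective_eq_zero src (fun y => (y.1, y.2))
    (e := fun y => (e1 y.1, e2 y.2, (default : Q))) fun y y' h => by
      simp only [Prod.mk.injEq] at h
      exact Prod.ext (he1 h.1) (he2 h.2.1)

end Deterministic

/-- **Slepian–Wolf-minus-`D` region** (single-letter form of Theorem 4): with
`X = (Y1,Y2)`, the single-letter CEO outer-bound inequalities admit auxiliary random
variables `U1, U2, Q` (with the stated independence structure) iff
`R1 ≥ H(Y1|Y2) − D`, `R2 ≥ H(Y2|Y1) − D`, `R1+R2 ≥ H(Y1,Y2) − D` and `D ≥ 0`. -/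
theorem slepian_wolf_minus_D {Y1 Y2 : Type} [Fintype Y1] [Fintype Y2]
    (src : Y1 × Y2 → ℝ) (hsrc : IsPmf src) (R1 R2 D : ℝ) :
    (∃ (n1 n2 nq : ℕ) (pq : Fin nq → ℝ)
        (k1 : Fin nq → Y1 → Fin n1 → ℝ) (k2 : Fin nq → Y2 → Fin n2 → ℝ),
      (∀ q, 0 ≤ pq q) ∧ (∑ q, pq q) = 1 ∧ IsKernel k1 ∧ IsKernel k2 ∧
      R1 ≥ condMutInfo (jointW src pq k1 k2) (fun z => z.2.1) (fun z => z.2.2.2.1)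
            (fun z => ((z.2.1, z.2.2.1), z.1)) +
          condEnt (jointW src pq k1 k2) (fun z => (z.2.1, z.2.2.1))
            (fun z => (z.2.2.2.2, z.1)) - D ∧
      R2 ≥ condMutInfo (jointW src pq k1 k2) (fun z => z.2.2.1) (fun z => z.2.2.2.2)
            (fun z => ((z.2.1, z.2.2.1), z.1)) +
          condEnt (jointW src pq k1 k2) (fun z => (z.2.1, z.2.2.1))
            (fun z => (z.2.2.2.1, z.1)) - D ∧
      R1 + R2 ≥ condMutInfo (jointW src pq k1 k2) (fun z => z.2.2.2.1) (fun z => z.2.1)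
            (fun z => ((z.2.1, z.2.2.1), z.1)) +
          condMutInfo (jointW src pq k1 k2) (fun z => z.2.2.2.2) (fun z => z.2.2.1)
            (fun z => ((z.2.1, z.2.2.1), z.1)) +
          ent (jointW src pq k1 k2) (fun z => (z.2.1, z.2.2.1)) - D ∧
      D ≥ condEnt (jointW src pq k1 k2) (fun z => (z.2.1, z.2.2.1))
            (fun z => (z.2.2.2.1, z.2.2.2.2, z.1))) ↔
    (R1 ≥ condEnt src Prod.fst Prod.snd - D ∧
     R2 ≥ condEnt src Prod.snd Prod.fst - D ∧
     R1 + R2 ≥ ent src id - D ∧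
     D ≥ 0) := by
  constructor
  · rintro ⟨n1, n2, nq, pq, k1, k2, hq0, hq1, hk1, hk2, h1, h2, h12, hD⟩
    rw [condMutInfo_source_fst_eq_zero] at h1
    rw [condMutInfo_source_snd_eq_zero] at h2
    rw [condMutInfo_comm, condMutInfo_source_fst_eq_zero, condMutInfo_comm,
      condMutInfo_source_snd_eq_zero, ent_jointW_source src hq1 hk1.2 hk2.2] at h12
    have hY1 := condEnt_source_le_condEnt_jointW_fst src hsrc.1 hq0 hq1 hk1 hk2
    have hY2 := condEnt_source_le_condEnt_jointW_snd src hsrc.1 hq0 hq1 hk1 hk2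
    have hX := condEnt_nonneg (jointW_nonneg src hsrc.1 hq0 hk1.1 hk2.1)
      (fun z => (z.2.1, z.2.2.1)) (fun z => (z.2.2.2.1, z.2.2.2.2, z.1))
    exact ⟨by linarith, by linarith, by linarith, by linarith⟩
  · rintro ⟨h1, h2, h12, hD⟩
    let e1 := Fintype.equivFin Y1
    let e2 := Fintype.equivFin Y2
    have hq1 : ∑ _ : Fin 1, (1 : ℝ) = 1 := by simp
    have hk1 := isKernel_detKernel (Q := Fin 1) e1
    have hk2 := isKernel_detKernel (Q := Fin 1) e2
    refine ⟨_, _, 1, fun _ => 1, detKernel e1, detKernel e2, fun _ => zero_le_one, hq1, hk1, hk2,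
      ?_, ?_, ?_, ?_⟩
    · rw [condMutInfo_source_fst_eq_zero, condEnt_jointW_detKernel_fst src e2.injective]
      linarith
    · rw [condMutInfo_source_snd_eq_zero, condEnt_jointW_detKernel_snd src e1.injective]
      linarith
    · rw [condMutInfo_comm, condMutInfo_source_fst_eq_zero, condMutInfo_comm,
        condMutInfo_source_snd_eq_zero, ent_jointW_source src hq1 hk1.2 hk2.2]
      linarith
    · rw [condEnt_jointW_detKernel_eq_zero src e1.injective e2.injective]
      exact hD
end
end

section
/- Amplifying a pointwise convexity constraint: let r1, r2 ∈ ℝ, let K ⊂ ℝⁿ be a nonempty compact set, and let f1 : K → ℝ and f2 : K → ℝ be continuous. If there exists a function h : [0,1] → K such that t·f1(h(t)) + (1−t)·f2(h(t)) ≤ t·r1 + (1−t)·r2 for all t ∈ [0,1], then there exist x1*, x2* ∈ K and t* ∈ [0,1] such that t*·f1(x1*) + (1−t*)·f1(x2*) ≤ r1 and t*·f2(x1*) + (1−t*)·f2(x2*) ≤ r2. -/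
lemma amplify_key (t a1 b1 a2 b2 : ℝ) (ht0 : 0 ≤ t) (ht1 : t ≤ 1)
    (h1 : t * a1 + (1 - t) * b1 ≤ 0) (ha1 : a1 ≤ 0)
    (h2 : t * a2 + (1 - t) * b2 ≤ 0) (hb2 : b2 ≤ 0) :
    ∃ s ∈ Set.Icc (0:ℝ) 1, s * a1 + (1 - s) * a2 ≤ 0 ∧ s * b1 + (1 - s) * b2 ≤ 0 := by
  by_cases hb1 : b1 ≤ 0
  · exact ⟨1, ⟨zero_le_one, le_refl 1⟩, by linarith, by linarith⟩
  by_cases ha2 : a2 ≤ 0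
  · exact ⟨0, ⟨le_refl 0, zero_le_one⟩, by linarith, by linarith⟩
  push_neg at hb1 ha2
  have ht0' : 0 < t := by
    rcases eq_or_lt_of_le ht0 with h | h
    · exfalso; rw [← h] at h1; simp at h1; linarith
    · exact h
  have ht1' : t < 1 := by
    rcases eq_or_lt_of_le ht1 with h | h
    · exfalso; rw [h] at h2; simp at h2; linarith
    · exact h
  have h1' : (1 - t) * b1 ≤ t * (-a1) := by nlinarith
  have h2' : t * a2 ≤ (1 - t) * (-b2) := by nlinarith
  have h3 := mul_le_mul h1' h2' (mul_nonneg ht0'.le ha2.le)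
    (mul_nonneg ht0'.le (by linarith))
  have hpos : 0 < t * (1 - t) := mul_pos ht0' (by linarith)
  have hkey : a2 * b1 ≤ a1 * b2 := by nlinarith
  have hD : 0 < a2 - a1 := by linarith
  refine ⟨a2 / (a2 - a1), ⟨div_nonneg ha2.le hD.le, by rw [div_le_one hD]; linarith⟩, ?_, ?_⟩
  · have : a2 / (a2 - a1) * a1 + (1 - a2 / (a2 - a1)) * a2 = 0 := by
      field_simp; ring
    linarith
  · have heq : a2 / (a2 - a1) * b1 + (1 - a2 / (a2 - a1)) * b2
        = (a2 * b1 - a1 * b2) / (a2 - a1) := by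
      field_simp; ring
    rw [heq]
    exact div_nonpos_of_nonpos_of_nonneg (by linarith) hD.le

/-- **Amplifying a pointwise convexity constraint**: if `K ⊂ ℝⁿ` is nonempty and
compact, `f1, f2` are continuous on `K`, and some `h : [0,1] → K` satisfies
`t·f1(h(t)) + (1−t)·f2(h(t)) ≤ t·r1 + (1−t)·r2` for all `t ∈ [0,1]`, then there exist
`x1*, x2* ∈ K` and `t* ∈ [0,1]` with `t*·f1(x1*) + (1−t*)·f1(x2*) ≤ r1` and
`t*·f2(x1*) + (1−t*)·f2(x2*) ≤ r2`. -/
theorem amplify_pointwise_convexity {n : ℕ} (K : Set (Fin n → ℝ))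
    (hK : IsCompact K) (hne : K.Nonempty) (r1 r2 : ℝ)
    (f1 f2 : (Fin n → ℝ) → ℝ) (hf1 : ContinuousOn f1 K) (hf2 : ContinuousOn f2 K)
    (h : ℝ → Fin n → ℝ) (hmem : ∀ t ∈ Set.Icc (0:ℝ) 1, h t ∈ K)
    (hineq : ∀ t ∈ Set.Icc (0:ℝ) 1,
      t * f1 (h t) + (1 - t) * f2 (h t) ≤ t * r1 + (1 - t) * r2) :
    ∃ x1 ∈ K, ∃ x2 ∈ K, ∃ t ∈ Set.Icc (0:ℝ) 1,
      t * f1 x1 + (1 - t) * f1 x2 ≤ r1 ∧ t * f2 x1 + (1 - t) * f2 x2 ≤ r2 := by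
  classical
  have hKc : IsClosed K := hK.isClosed
  -- Tietze extensions
  obtain ⟨F1, hF1⟩ := ContinuousMap.exists_restrict_eq (Y := ℝ) hKc
    ⟨K.restrict f1, hf1.restrict⟩
  obtain ⟨F2, hF2⟩ := ContinuousMap.exists_restrict_eq (Y := ℝ) hKc
    ⟨K.restrict f2, hf2.restrict⟩
  have hF1' : ∀ x ∈ K, F1 x = f1 x := fun x hx => ContinuousMap.congr_fun hF1 ⟨x, hx⟩
  have hF2' : ∀ x ∈ K, F2 x = f2 x := fun x hx => ContinuousMap.congr_fun hF2 ⟨x, hx⟩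
  have hcF1 : Continuous F1 := F1.continuous
  have hcF2 : Continuous F2 := F2.continuous
  -- the two closed sets
  set P : ℝ × (Fin n → ℝ) → ℝ :=
    fun p => p.1 * (F1 p.2 - r1) + (1 - p.1) * (F2 p.2 - r2) with hP
  have hcP : Continuous P := by fun_prop
  have hclosed : ∀ g : (Fin n → ℝ) → ℝ, Continuous g →
      IsClosed (Prod.fst '' ((Set.Icc (0:ℝ) 1 ×ˢ K) ∩ {p | P p ≤ 0 ∧ g p.2 ≤ 0})) := by
    intro g hg
    have hcomp : IsCompact ((Set.Icc (0:ℝ) 1 ×ˢ K) ∩ {p | P p ≤ 0 ∧ g p.2 ≤ 0}) := by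
      apply (isCompact_Icc.prod hK).inter_right
      exact (isClosed_le hcP continuous_const).inter
        (isClosed_le (hg.comp continuous_snd) continuous_const)
    exact (hcomp.image continuous_fst).isClosed
  set A : Set ℝ := Prod.fst '' ((Set.Icc (0:ℝ) 1 ×ˢ K) ∩
    {p | P p ≤ 0 ∧ (fun x => F1 x - r1) p.2 ≤ 0}) with hAdef
  set B : Set ℝ := Prod.fst '' ((Set.Icc (0:ℝ) 1 ×ˢ K) ∩
    {p | P p ≤ 0 ∧ (fun x => F2 x - r2) p.2 ≤ 0}) with hBdef
  have hA : IsClosed A := hclosed (fun x => F1 x - r1) (by fun_prop)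
  have hB : IsClosed B := hclosed (fun x => F2 x - r2) (by fun_prop)
  -- cover
  have hcover : Set.Icc (0:ℝ) 1 ⊆ A ∪ B := by
    intro t ht
    have hx : h t ∈ K := hmem t ht
    have hi := hineq t ht
    have hPle : P (t, h t) ≤ 0 := by
      simp only [hP]
      rw [hF1' _ hx, hF2' _ hx]
      nlinarith
    have hPle' : t * (F1 (h t) - r1) + (1 - t) * (F2 (h t) - r2) ≤ 0 := by
      simpa only [hP] using hPle
    have : F1 (h t) - r1 ≤ 0 ∨ F2 (h t) - r2 ≤ 0 := by
      by_contra hcon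
      push_neg at hcon
      obtain ⟨h1, h2⟩ := hcon
      rcases eq_or_lt_of_le ht.1 with h0 | h0
      · subst h0; linarith
      · have h1' : t * (F1 (h t) - r1) > 0 := mul_pos h0 h1
        have h2' : (1 - t) * (F2 (h t) - r2) ≥ 0 :=
          mul_nonneg (by linarith [ht.2]) h2.le
        linarith
    rcases this with h1 | h2
    · exact Or.inl ⟨(t, h t), ⟨⟨ht, hx⟩, hPle, h1⟩, rfl⟩
    · exact Or.inr ⟨(t, h t), ⟨⟨ht, hx⟩, hPle, h2⟩, rfl⟩
  have h1A : (1:ℝ) ∈ A := by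
    have h1I : (1:ℝ) ∈ Set.Icc (0:ℝ) 1 := ⟨zero_le_one, le_refl 1⟩
    have hx : h 1 ∈ K := hmem 1 h1I
    have hi := hineq 1 h1I
    have hf : F1 (h 1) - r1 ≤ 0 := by rw [hF1' _ hx]; linarith
    refine ⟨(1, h 1), ⟨⟨h1I, hx⟩, ?_, hf⟩, rfl⟩
    simp only [hP]; nlinarith
  have h0B : (0:ℝ) ∈ B := by
    have h0I : (0:ℝ) ∈ Set.Icc (0:ℝ) 1 := ⟨le_refl 0, zero_le_one⟩
    have hx : h 0 ∈ K := hmem 0 h0I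
    have hi := hineq 0 h0I
    have hf : F2 (h 0) - r2 ≤ 0 := by rw [hF2' _ hx]; linarith
    refine ⟨(0, h 0), ⟨⟨h0I, hx⟩, ?_, hf⟩, rfl⟩
    simp only [hP]; nlinarith
  -- connectedness gives a point in A ∩ B
  obtain ⟨t, htI, htA, htB⟩ :=
    isPreconnected_closed_iff.mp isPreconnected_Icc A B hA hB hcover
      ⟨1, ⟨zero_le_one, le_refl 1⟩, h1A⟩ ⟨0, ⟨le_refl 0, zero_le_one⟩, h0B⟩
  obtain ⟨⟨t1, x1⟩, ⟨⟨ht1I, hx1K⟩, hP1, hg1⟩, ht1eq⟩ := htA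
  obtain ⟨⟨t2, x2⟩, ⟨⟨ht2I, hx2K⟩, hP2, hg2⟩, ht2eq⟩ := htB
  subst ht1eq
  cases ht2eq
  simp only [hP] at hP1 hP2
  simp only at hg1 hg2
  obtain ⟨s, hsI, hs1, hs2⟩ := amplify_key t1 (F1 x1 - r1) (F2 x1 - r2)
    (F1 x2 - r1) (F2 x2 - r2) ht1I.1 ht1I.2 (by linarith) hg1 (by linarith) hg2
  refine ⟨x1, hx1K, x2, hx2K, s, hsI, ?_, ?_⟩
  · rw [← hF1' _ hx1K, ← hF1' _ hx2K]; nlinarith [hsI.1, hsI.2]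
  · rw [← hF2' _ hx1K, ← hF2' _ hx2K]; nlinarith [hsI.1, hsI.2]
end

section
/- Supermodularity of conditional mutual information over encoder subsets: let Q, Y1, …, Ym, U1, …, Um be finitely-valued jointly distributed random variables such that, for each i, Ui is conditionally independent of all the other variables (Y_j for j ≠ i, U_j for j ≠ i) given (Y_i, Q). Then the set function f'(S) = I(Y_S; U_S | U_{S^c}, Q), defined for subsets S ⊆ {1,…,m}, is supermodular: for all S, T ⊆ {1,…,m}, f'(S) + f'(T) ≤ f'(S∩T) + f'(S∪T). -/
open scoped BigOperators Classical

noncomputable section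

/-- The set function `f'(S) = I(Y_S ; U_S | U_{Sᶜ}, Q)`. -/
def fPrime {m : ℕ} {Ω Q : Type} {Y U : Fin m → Type} [Fintype Ω] [Fintype Q]
    [∀ i, Fintype (Y i)] [∀ i, Fintype (U i)]
    (p : Ω → ℝ) (Yv : ∀ i, Ω → Y i) (Uv : ∀ i, Ω → U i) (Qv : Ω → Q)
    (S : Finset (Fin m)) : ℝ :=
  condMutInfo p (fun ω => fun i : {j : Fin m // j ∈ S} => Yv i.1 ω)
    (fun ω => fun i : {j : Fin m // j ∈ S} => Uv i.1 ω)
    (fun ω => ((fun j : {j : Fin m // j ∉ S} => Uv j.1 ω), Qv ω))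

set_option linter.unusedSectionVars false

variable {Ω : Type*} [Fintype Ω] {p : Ω → ℝ}

lemma pr_nonneg (hp : ∀ ω, 0 ≤ p ω) {α : Type*} (A : Ω → α) (a : α) : 0 ≤ pr p A a := by
  refine Finset.sum_nonneg fun ω _ => ?_
  by_cases h : A ω = a <;> simp [h, hp ω]

lemma sum_pr {α : Type*} [Fintype α] (hp : IsPmf p) (A : Ω → α) : ∑ a, pr p A a = 1 := by
  unfold pr
  rw [Finset.sum_comm]
  rw [Finset.sum_congr rfl fun ω _ => Finset.sum_ite_eq Finset.univ (A ω) (fun _ => p ω)]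
  simpa using hp.2

lemma ent_comp_inj {α β : Type*} [Fintype α] [Fintype β] (p : Ω → ℝ) (A : Ω → α) (g : α → β)
    (hg : Function.Injective g) : ent p (fun ω => g (A ω)) = ent p A := by
  unfold ent
  congr 1
  rw [← Finset.sum_subset (Finset.subset_univ ((Finset.univ : Finset α).image g))]
  · rw [Finset.sum_image (fun a _ b _ h => hg h)]
    refine Finset.sum_congr rfl fun a _ => ?_
    have : pr p (fun ω => g (A ω)) (g a) = pr p A a := by
      unfold pr; exact Finset.sum_congr rfl fun ω _ => by simp [hg.eq_iff]
    rw [this]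
  · intro b _ hb
    have h0 : pr p (fun ω => g (A ω)) b = 0 := by
      unfold pr
      refine Finset.sum_eq_zero fun ω _ => ?_
      rw [if_neg]; intro h; exact hb (Finset.mem_image.2 ⟨A ω, Finset.mem_univ _, h⟩)
    simp [h0]

lemma ent_eq_ent {α β : Type*} [Fintype α] [Fintype β] (p : Ω → ℝ) (A : Ω → α) (B : Ω → β)
    (g : α → β) (h : β → α) (hg : ∀ ω, g (A ω) = B ω) (hh : ∀ ω, h (B ω) = A ω) :
    ent p A = ent p B := by
  have h1 : ent p (fun ω => (A ω, B ω)) = ent p A := by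
    have e : (fun ω => (A ω, B ω)) = fun ω => ((fun a => (a, g a)) (A ω)) := by
      funext ω; simp [hg ω]
    rw [e]
    exact ent_comp_inj p A (fun a => (a, g a)) (fun x y hxy => congrArg Prod.fst hxy)
  have h2 : ent p (fun ω => (A ω, B ω)) = ent p B := by
    have e : (fun ω => (A ω, B ω)) = fun ω => ((fun b => (h b, b)) (B ω)) := by
      funext ω; simp [hh ω]
    rw [e]
    exact ent_comp_inj p B (fun b => (h b, b)) (fun x y hxy => congrArg Prod.snd hxy)
  rw [← h1, h2]

-- marginal lemmas
lemma pr_snd_pair {α β : Type*} [Fintype α] (A : Ω → α) (B : Ω → β) (b : β) :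
    pr p B b = ∑ a, pr p (fun ω => (A ω, B ω)) (a, b) := by
  unfold pr
  rw [Finset.sum_comm]
  refine Finset.sum_congr rfl fun ω _ => ?_
  simp only [Prod.mk.injEq, ite_and]
  rw [Finset.sum_ite_eq Finset.univ (A ω) (fun _ => if B ω = b then p ω else 0)]
  simp

lemma pr_fst_pair {α β : Type*} [Fintype β] (A : Ω → α) (B : Ω → β) (a : α) :
    pr p A a = ∑ b, pr p (fun ω => (A ω, B ω)) (a, b) := by
  unfold pr
  rw [Finset.sum_comm]
  refine Finset.sum_congr rfl fun ω _ => ?_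
  simp only [Prod.mk.injEq, ite_and]
  by_cases hA : A ω = a
  · simp only [hA, if_true]
    rw [Finset.sum_ite_eq Finset.univ (B ω) (fun _ => p ω)]
    simp
  · simp [hA]

lemma pr_marg_mid {α β γ : Type*} [Fintype β] (A : Ω → α) (B : Ω → β) (C : Ω → γ)
    (a : α) (c : γ) :
    pr p (fun ω => (A ω, C ω)) (a, c) = ∑ b, pr p (fun ω => (A ω, B ω, C ω)) (a, b, c) := by
  unfold pr
  rw [Finset.sum_comm]
  refine Finset.sum_congr rfl fun ω _ => ?_
  simp only [Prod.mk.injEq, ite_and]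
  by_cases hA : A ω = a
  · simp only [hA, if_true]
    rw [Finset.sum_ite_eq Finset.univ (B ω) (fun _ => if C ω = c then p ω else 0)]
    simp
  · simp [hA]

section triple
variable {α β γ : Type*} [Fintype α] [Fintype β] [Fintype γ]

lemma sum3_acb {f : α → β → γ → ℝ} :
    ∑ a, ∑ c, ∑ b, f a b c = ∑ a, ∑ b, ∑ c, f a b c :=
  Finset.sum_congr rfl fun _ _ => Finset.sum_comm

lemma sum3_bca {f : α → β → γ → ℝ} :
    ∑ b, ∑ c, ∑ a, f a b c = ∑ a, ∑ b, ∑ c, f a b c := by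
  calc ∑ b, ∑ c, ∑ a, f a b c = ∑ b, ∑ a, ∑ c, f a b c :=
        Finset.sum_congr rfl fun _ _ => Finset.sum_comm
    _ = ∑ a, ∑ b, ∑ c, f a b c := Finset.sum_comm

lemma sum3_cba {f : α → β → γ → ℝ} :
    ∑ c, ∑ b, ∑ a, f a b c = ∑ a, ∑ b, ∑ c, f a b c := by
  calc ∑ c, ∑ b, ∑ a, f a b c = ∑ c, ∑ a, ∑ b, f a b c :=
        Finset.sum_congr rfl fun _ _ => Finset.sum_comm
    _ = ∑ a, ∑ c, ∑ b, f a b c := Finset.sum_comm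
    _ = ∑ a, ∑ b, ∑ c, f a b c := sum3_acb

variable (p) (A : Ω → α) (B : Ω → β) (C : Ω → γ)

lemma entABC_expand :
    ent p (fun ω => (A ω, B ω, C ω)) =
      -∑ a, ∑ b, ∑ c, pr p (fun ω => (A ω, B ω, C ω)) (a, b, c) *
        Real.logb 2 (pr p (fun ω => (A ω, B ω, C ω)) (a, b, c)) := by
  unfold ent
  congr 1
  rw [Fintype.sum_prod_type]
  exact Finset.sum_congr rfl fun a _ => by rw [Fintype.sum_prod_type]

lemma entAC_expand :
    ent p (fun ω => (A ω, C ω)) =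
      -∑ a, ∑ b, ∑ c, pr p (fun ω => (A ω, B ω, C ω)) (a, b, c) *
        Real.logb 2 (pr p (fun ω => (A ω, C ω)) (a, c)) := by
  unfold ent
  congr 1
  rw [Fintype.sum_prod_type, ← sum3_acb]
  refine Finset.sum_congr rfl fun a _ => Finset.sum_congr rfl fun c _ => ?_
  rw [pr_marg_mid A B C a c, Finset.sum_mul]

lemma entBC_expand :
    ent p (fun ω => (B ω, C ω)) =
      -∑ a, ∑ b, ∑ c, pr p (fun ω => (A ω, B ω, C ω)) (a, b, c) *
        Real.logb 2 (pr p (fun ω => (B ω, C ω)) (b, c)) := by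
  unfold ent
  congr 1
  rw [Fintype.sum_prod_type, ← sum3_bca]
  refine Finset.sum_congr rfl fun b _ => Finset.sum_congr rfl fun c _ => ?_
  rw [pr_snd_pair A (fun ω => (B ω, C ω)) (b, c), Finset.sum_mul]

lemma entC_expand :
    ent p C =
      -∑ a, ∑ b, ∑ c, pr p (fun ω => (A ω, B ω, C ω)) (a, b, c) *
        Real.logb 2 (pr p C c) := by
  unfold ent
  congr 1
  rw [← sum3_cba]
  refine Finset.sum_congr rfl fun c _ => ?_
  rw [pr_snd_pair B C c, Finset.sum_mul]
  refine Finset.sum_congr rfl fun b _ => ?_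
  rw [pr_snd_pair A (fun ω => (B ω, C ω)) (b, c), Finset.sum_mul]

lemma pr_abc_le_ac (hp : ∀ ω, 0 ≤ p ω) (a b c) :
    pr p (fun ω => (A ω, B ω, C ω)) (a, b, c) ≤ pr p (fun ω => (A ω, C ω)) (a, c) := by
  rw [pr_marg_mid A B C a c]
  exact Finset.single_le_sum (f := fun b => pr p (fun ω => (A ω, B ω, C ω)) (a, b, c))
    (fun i _ => pr_nonneg hp _ _) (Finset.mem_univ b)

lemma pr_abc_le_bc (hp : ∀ ω, 0 ≤ p ω) (a b c) :
    pr p (fun ω => (A ω, B ω, C ω)) (a, b, c) ≤ pr p (fun ω => (B ω, C ω)) (b, c) := by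
  rw [pr_snd_pair A (fun ω => (B ω, C ω)) (b, c)]
  exact Finset.single_le_sum (f := fun a => pr p (fun ω => (A ω, B ω, C ω)) (a, b, c))
    (fun i _ => pr_nonneg hp _ _) (Finset.mem_univ a)

lemma pr_bc_le_c (hp : ∀ ω, 0 ≤ p ω) (b c) :
    pr p (fun ω => (B ω, C ω)) (b, c) ≤ pr p C c := by
  rw [pr_snd_pair B C c]
  exact Finset.single_le_sum (f := fun b => pr p (fun ω => (B ω, C ω)) (b, c))
    (fun i _ => pr_nonneg hp _ _) (Finset.mem_univ b)

lemma pr_ac_le_c (hp : ∀ ω, 0 ≤ p ω) (a c) :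
    pr p (fun ω => (A ω, C ω)) (a, c) ≤ pr p C c := by
  rw [pr_snd_pair A C c]
  exact Finset.single_le_sum (f := fun a => pr p (fun ω => (A ω, C ω)) (a, c))
    (fun i _ => pr_nonneg hp _ _) (Finset.mem_univ a)

end triple


section big
set_option linter.unusedSectionVars false
variable {α β γ : Type*} [Fintype α] [Fintype β] [Fintype γ]


lemma condIndep_ent' (hp : ∀ ω, 0 ≤ p ω) (A : Ω → α) (B : Ω → β) (C : Ω → γ)
    (hci : CondIndep p A B C) :
    ent p (fun ω => (A ω, B ω, C ω)) =
      ent p (fun ω => (A ω, C ω)) + ent p (fun ω => (B ω, C ω)) - ent p C := by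
  rw [entABC_expand p A B C, entAC_expand p A B C, entBC_expand p A B C, entC_expand p A B C]
  have key : ∀ a b c, pr p (fun ω => (A ω, B ω, C ω)) (a, b, c) *
      Real.logb 2 (pr p (fun ω => (A ω, B ω, C ω)) (a, b, c)) =
      pr p (fun ω => (A ω, B ω, C ω)) (a, b, c) *
        (Real.logb 2 (pr p (fun ω => (A ω, C ω)) (a, c)) +
         Real.logb 2 (pr p (fun ω => (B ω, C ω)) (b, c)) - Real.logb 2 (pr p C c)) := by
    intro a b c
    rcases eq_or_lt_of_le (pr_nonneg hp (fun ω => (A ω, B ω, C ω)) (a, b, c)) with h0 | h0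
    · rw [← h0]; ring
    · have hAC : 0 < pr p (fun ω => (A ω, C ω)) (a, c) :=
        lt_of_lt_of_le h0 (pr_abc_le_ac p A B C hp a b c)
      have hBC : 0 < pr p (fun ω => (B ω, C ω)) (b, c) :=
        lt_of_lt_of_le h0 (pr_abc_le_bc p A B C hp a b c)
      have hC : 0 < pr p C c := lt_of_lt_of_le hBC (pr_bc_le_c p B C hp b c)
      have hPeq : pr p (fun ω => (A ω, B ω, C ω)) (a, b, c) =
          pr p (fun ω => (A ω, C ω)) (a, c) * pr p (fun ω => (B ω, C ω)) (b, c)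
          / pr p C c := by
        rw [eq_div_iff hC.ne']; exact hci a b c
      rw [hPeq, Real.logb_div (mul_ne_zero hAC.ne' hBC.ne') hC.ne',
        Real.logb_mul hAC.ne' hBC.ne']
  rw [Finset.sum_congr rfl fun a _ => Finset.sum_congr rfl fun b _ =>
    Finset.sum_congr rfl fun c _ => key a b c]
  simp only [mul_add, mul_sub, Finset.sum_add_distrib, Finset.sum_sub_distrib]
  ring

lemma condMutInfo_nonneg' (hp : IsPmf p) (A : Ω → α) (B : Ω → β) (C : Ω → γ) :
    0 ≤ ent p (fun ω => (A ω, C ω)) + ent p (fun ω => (B ω, C ω))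
      - ent p (fun ω => (A ω, B ω, C ω)) - ent p C := by
  have hp0 := hp.1
  rw [entABC_expand p A B C, entAC_expand p A B C, entBC_expand p A B C, entC_expand p A B C]
  have hlog2 : (0:ℝ) < Real.log 2 := Real.log_pos (by norm_num)
  have main : ∑ a, ∑ b, ∑ c, pr p (fun ω => (A ω, B ω, C ω)) (a, b, c) *
      (Real.logb 2 (pr p (fun ω => (A ω, C ω)) (a, c)) +
       Real.logb 2 (pr p (fun ω => (B ω, C ω)) (b, c)) -
       Real.logb 2 (pr p (fun ω => (A ω, B ω, C ω)) (a, b, c)) -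
       Real.logb 2 (pr p C c)) ≤ 0 := by
    have step1 : ∑ a, ∑ b, ∑ c, pr p (fun ω => (A ω, B ω, C ω)) (a, b, c) *
        (Real.logb 2 (pr p (fun ω => (A ω, C ω)) (a, c)) +
         Real.logb 2 (pr p (fun ω => (B ω, C ω)) (b, c)) -
         Real.logb 2 (pr p (fun ω => (A ω, B ω, C ω)) (a, b, c)) -
         Real.logb 2 (pr p C c)) ≤
        ∑ a, ∑ b, ∑ c, (pr p (fun ω => (A ω, C ω)) (a, c) *
          pr p (fun ω => (B ω, C ω)) (b, c) / pr p C c -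
          pr p (fun ω => (A ω, B ω, C ω)) (a, b, c)) / Real.log 2 := by
      refine Finset.sum_le_sum fun a _ => Finset.sum_le_sum fun b _ =>
        Finset.sum_le_sum fun c _ => ?_
      rcases eq_or_lt_of_le (pr_nonneg hp0 (fun ω => (A ω, B ω, C ω)) (a, b, c)) with h0 | h0
      · rw [← h0]
        simp only [zero_mul, sub_zero]
        apply div_nonneg _ hlog2.le
        exact div_nonneg (mul_nonneg (pr_nonneg hp0 _ _) (pr_nonneg hp0 _ _)) (pr_nonneg hp0 _ _)
      · have hACp : 0 < pr p (fun ω => (A ω, C ω)) (a, c) :=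
          lt_of_lt_of_le h0 (pr_abc_le_ac p A B C hp0 a b c)
        have hBCp : 0 < pr p (fun ω => (B ω, C ω)) (b, c) :=
          lt_of_lt_of_le h0 (pr_abc_le_bc p A B C hp0 a b c)
        have hCp : 0 < pr p C c := lt_of_lt_of_le hBCp (pr_bc_le_c p B C hp0 b c)
        set P := pr p (fun ω => (A ω, B ω, C ω)) (a, b, c)
        set AC := pr p (fun ω => (A ω, C ω)) (a, c)
        set BC := pr p (fun ω => (B ω, C ω)) (b, c)
        set PC := pr p C c
        have hr : (0:ℝ) < AC * BC / (P * PC) := div_pos (mul_pos hACp hBCp) (mul_pos h0 hCp)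
        have hlogb : Real.logb 2 AC + Real.logb 2 BC - Real.logb 2 P - Real.logb 2 PC =
            Real.log (AC * BC / (P * PC)) / Real.log 2 := by
          rw [Real.log_div (mul_pos hACp hBCp).ne' (mul_pos h0 hCp).ne',
            Real.log_mul hACp.ne' hBCp.ne', Real.log_mul h0.ne' hCp.ne']
          simp only [Real.logb]
          ring
        rw [hlogb, ← mul_div_assoc, div_le_div_iff₀ hlog2 hlog2]
        have hle : Real.log (AC * BC / (P * PC)) ≤ AC * BC / (P * PC) - 1 :=
          Real.log_le_sub_one_of_pos hr
        have h2 : P * Real.log (AC * BC / (P * PC)) ≤ P * (AC * BC / (P * PC) - 1) :=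
          mul_le_mul_of_nonneg_left hle h0.le
        have h3 : P * (AC * BC / (P * PC) - 1) = AC * BC / PC - P := by
          field_simp
        nlinarith [h2, h3, hlog2]
    refine le_trans step1 ?_
    have e1 : ∑ a, ∑ b, ∑ c, (pr p (fun ω => (A ω, C ω)) (a, c) *
        pr p (fun ω => (B ω, C ω)) (b, c) / pr p C c -
        pr p (fun ω => (A ω, B ω, C ω)) (a, b, c)) / Real.log 2 =
        ((∑ c, pr p C c * (pr p C c / pr p C c)) -
          ∑ a, ∑ b, ∑ c, pr p (fun ω => (A ω, B ω, C ω)) (a, b, c)) / Real.log 2 := by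
      simp only [sub_div, Finset.sum_sub_distrib, ← Finset.sum_div]
      congr 2
      rw [← sum3_cba]
      refine Finset.sum_congr rfl fun c _ => ?_
      calc ∑ b, ∑ a, pr p (fun ω => (A ω, C ω)) (a, c) *
            pr p (fun ω => (B ω, C ω)) (b, c) / pr p C c
          = (∑ a, ∑ b, pr p (fun ω => (A ω, C ω)) (a, c) *
            pr p (fun ω => (B ω, C ω)) (b, c)) / pr p C c := by
            rw [Finset.sum_comm]
            simp only [Finset.sum_div]
        _ = ((∑ a, pr p (fun ω => (A ω, C ω)) (a, c)) *
            (∑ b, pr p (fun ω => (B ω, C ω)) (b, c))) / pr p C c := by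
            rw [Finset.sum_mul_sum]
        _ = pr p C c * (pr p C c / pr p C c) := by
            rw [← pr_snd_pair A C c, ← pr_snd_pair B C c, mul_div_assoc]
    rw [e1]
    have e2 : ∑ a, ∑ b, ∑ c, pr p (fun ω => (A ω, B ω, C ω)) (a, b, c) = 1 := by
      have h1 : (∑ x : α × β × γ, pr p (fun ω => (A ω, B ω, C ω)) x) = 1 := sum_pr hp _
      rw [Fintype.sum_prod_type] at h1
      rw [← h1]
      exact Finset.sum_congr rfl fun a _ => by rw [Fintype.sum_prod_type]
    rw [e2]
    apply div_nonpos_of_nonpos_of_nonneg _ hlog2.le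
    rw [sub_nonpos]
    calc ∑ c, pr p C c * (pr p C c / pr p C c) ≤ ∑ c, pr p C c := by
          refine Finset.sum_le_sum fun c _ => ?_
          rcases eq_or_ne (pr p C c) 0 with h | h
          · simp [h]
          · rw [div_self h, mul_one]
      _ = 1 := sum_pr hp C
  simp only [mul_add, mul_sub, Finset.sum_add_distrib, Finset.sum_sub_distrib] at main
  linarith [main]

end big

section dp
set_option linter.unusedSectionVars false
variable {α β β' γ : Type*} [Fintype β]

lemma pr_fuse_mid (A : Ω → α) (B : Ω → β) (C : Ω → γ) (g : β → γ → β') (a : α) (z : β') (c : γ) :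
    pr p (fun ω => (A ω, g (B ω) (C ω), C ω)) (a, z, c) =
      ∑ b, if g b c = z then pr p (fun ω => (A ω, B ω, C ω)) (a, b, c) else 0 := by
  unfold pr
  rw [Finset.sum_congr rfl fun b _ => show _ = ∑ ω, if g b c = z then
      (if (A ω, B ω, C ω) = (a, b, c) then p ω else 0) else 0 from by split_ifs <;> simp]
  rw [Finset.sum_comm]
  refine Finset.sum_congr rfl fun ω _ => ?_
  rw [Finset.sum_congr rfl fun b _ => show (if g b c = z then
      (if (A ω, B ω, C ω) = (a, b, c) then p ω else 0) else 0) =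
      (if B ω = b then (if (A ω, g (B ω) (C ω), C ω) = (a, z, c) then p ω else 0) else 0) from ?_]
  · rw [Finset.sum_ite_eq]
    simp
  · by_cases hb : B ω = b
    · subst hb
      by_cases h1 : A ω = a <;> by_cases h3 : C ω = c
      · subst h3
        by_cases h2 : g (B ω) (C ω) = z <;> simp [h1, h2]
      all_goals simp [h1, h3]
    · by_cases hz : g b c = z <;> simp [hz, Prod.mk.injEq, hb]

lemma pr_fuse_fst (B : Ω → β) (C : Ω → γ) (g : β → γ → β') (z : β') (c : γ) :
    pr p (fun ω => (g (B ω) (C ω), C ω)) (z, c) =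
      ∑ b, if g b c = z then pr p (fun ω => (B ω, C ω)) (b, c) else 0 := by
  unfold pr
  rw [Finset.sum_congr rfl fun b _ => show _ = ∑ ω, if g b c = z then
      (if (B ω, C ω) = (b, c) then p ω else 0) else 0 from by split_ifs <;> simp]
  rw [Finset.sum_comm]
  refine Finset.sum_congr rfl fun ω _ => ?_
  rw [Finset.sum_congr rfl fun b _ => show (if g b c = z then
      (if (B ω, C ω) = (b, c) then p ω else 0) else 0) =
      (if B ω = b then (if (g (B ω) (C ω), C ω) = (z, c) then p ω else 0) else 0) from ?_]
  · rw [Finset.sum_ite_eq]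
    simp
  · by_cases hb : B ω = b
    · subst hb
      by_cases h3 : C ω = c
      · subst h3
        by_cases h2 : g (B ω) (C ω) = z <;> simp [h2]
      all_goals simp [h3]
    · by_cases hz : g b c = z <;> simp [hz, Prod.mk.injEq, hb]

lemma condIndep_fuse (A : Ω → α) (B : Ω → β) (C : Ω → γ) (g : β → γ → β')
    (hci : CondIndep p A B C) : CondIndep p A (fun ω => g (B ω) (C ω)) C := by
  intro a z c
  rw [pr_fuse_mid A B C g a z c, pr_fuse_fst B C g z c, Finset.sum_mul, Finset.mul_sum]
  refine Finset.sum_congr rfl fun b _ => ?_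
  by_cases h : g b c = z
  · rw [if_pos h, if_pos h]
    exact hci a b c
  · rw [if_neg h, if_neg h, zero_mul, mul_zero]

end dp


section dp2
set_option linter.unusedSectionVars false
variable {α β β' γ : Type*} [Fintype β]

lemma condIndep_fuse'' (A : Ω → α) (B : Ω → β) (C : Ω → γ) (g : β → γ → β')
    (V : Ω → β') (hV : ∀ ω, g (B ω) (C ω) = V ω)
    (hci : CondIndep p A B C) : CondIndep p A V C := by
  have h := condIndep_fuse A B C g hci
  rwa [show (fun ω => g (B ω) (C ω)) = V from funext hV] at h

end dp2

section main
set_option linter.unusedSectionVars false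
set_option maxHeartbeats 1000000

variable {m : ℕ} {Q : Type} {Y U : Fin m → Type} [Fintype Q]
  [∀ i, Fintype (Y i)] [∀ i, Fintype (U i)]

lemma ent_full_split (p : Ω → ℝ) (Uv : ∀ i, Ω → U i) (Qv : Ω → Q) (S : Finset (Fin m)) :
    ent p (fun ω => ((fun i : {j : Fin m // j ∈ S} => Uv i.1 ω),
      ((fun j : {j : Fin m // j ∉ S} => Uv j.1 ω), Qv ω))) =
    ent p (fun ω => ((fun i : Fin m => Uv i ω), Qv ω)) := by
  refine ent_eq_ent p _ _
    (fun x => ((fun i : Fin m => if hi : i ∈ S then x.1 ⟨i, hi⟩ else x.2.1 ⟨i, hi⟩), x.2.2))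
    (fun x => ((fun i : {j : Fin m // j ∈ S} => x.1 i.1),
      ((fun j : {j : Fin m // j ∉ S} => x.1 j.1), x.2)))
    (fun ω => ?_) (fun ω => rfl)
  refine congrArg₂ Prod.mk ?_ rfl
  funext i
  by_cases hi : i ∈ S <;> simp [hi]

lemma ent_full_split_y (p : Ω → ℝ) (Yv : ∀ i, Ω → Y i) (Uv : ∀ i, Ω → U i) (Qv : Ω → Q)
    (S : Finset (Fin m)) :
    ent p (fun ω => ((fun i : {j : Fin m // j ∈ S} => Yv i.1 ω),
      ((fun i : {j : Fin m // j ∈ S} => Uv i.1 ω),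
       ((fun j : {j : Fin m // j ∉ S} => Uv j.1 ω), Qv ω)))) =
    ent p (fun ω => ((fun i : {j : Fin m // j ∈ S} => Yv i.1 ω),
      ((fun i : Fin m => Uv i ω), Qv ω))) := by
  refine ent_eq_ent p _ _
    (fun x => (x.1, ((fun i : Fin m => if hi : i ∈ S then x.2.1 ⟨i, hi⟩ else x.2.2.1 ⟨i, hi⟩),
      x.2.2.2)))
    (fun x => (x.1, ((fun i : {j : Fin m // j ∈ S} => x.2.1 i.1),
      ((fun j : {j : Fin m // j ∉ S} => x.2.1 j.1), x.2.2))))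
    (fun ω => ?_) (fun ω => rfl)
  refine congrArg₂ Prod.mk rfl (congrArg₂ Prod.mk ?_ rfl)
  funext i
  by_cases hi : i ∈ S <;> simp [hi]

lemma ent_empty_compl (p : Ω → ℝ) (Yv : ∀ i, Ω → Y i) (Uv : ∀ i, Ω → U i) (Qv : Ω → Q)
    (T : Finset (Fin m)) :
    ent p (fun ω => ((fun i : {j : Fin m // j ∈ T} => Yv i.1 ω),
      ((fun j : {j : Fin m // j ∉ (∅ : Finset (Fin m))} => Uv j.1 ω), Qv ω))) =
    ent p (fun ω => ((fun i : {j : Fin m // j ∈ T} => Yv i.1 ω),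
      ((fun i : Fin m => Uv i ω), Qv ω))) := by
  refine ent_eq_ent p _ _
    (fun x => (x.1, ((fun i : Fin m => x.2.1 ⟨i, Finset.notMem_empty i⟩), x.2.2)))
    (fun x => (x.1, ((fun j : {j : Fin m // j ∉ (∅ : Finset (Fin m))} => x.2.1 j.1), x.2.2)))
    (fun ω => rfl) (fun ω => rfl)

lemma step_ent (p : Ω → ℝ) (Yv : ∀ i, Ω → Y i) (Uv : ∀ i, Ω → U i) (Qv : Ω → Q)
    (hp : ∀ ω, 0 ≤ p ω)
    (hU : ∀ i, CondIndep p (Uv i)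
      (fun ω => ((fun j : {j : Fin m // j ≠ i} => Yv j.1 ω),
                 (fun j : {j : Fin m // j ≠ i} => Uv j.1 ω)))
      (fun ω => (Yv i ω, Qv ω)))
    {T S : Finset (Fin m)} {a : Fin m} (haT : a ∈ T) (haS : a ∉ S) :
    ent p (fun ω => ((fun i : {j : Fin m // j ∈ T} => Yv i.1 ω),
      ((fun j : {j : Fin m // j ∉ S} => Uv j.1 ω), Qv ω)))
    - ent p (fun ω => ((fun i : {j : Fin m // j ∈ T} => Yv i.1 ω),
      ((fun j : {j : Fin m // j ∉ insert a S} => Uv j.1 ω), Qv ω)))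
    = ent p (fun ω => (Uv a ω, (Yv a ω, Qv ω))) - ent p (fun ω => (Yv a ω, Qv ω)) := by
  have hci0 : CondIndep p (Uv a)
      (fun ω => ((fun i : {j : Fin m // j ∈ T} => Yv i.1 ω),
                 (fun j : {j : Fin m // j ∉ insert a S} => Uv j.1 ω)))
      (fun ω => (Yv a ω, Qv ω)) := by
    refine condIndep_fuse'' (Uv a)
      (fun ω => ((fun j : {j : Fin m // j ≠ a} => Yv j.1 ω),
                 (fun j : {j : Fin m // j ≠ a} => Uv j.1 ω)))
      (fun ω => (Yv a ω, Qv ω))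
      (fun x y => ((fun i : {j : Fin m // j ∈ T} =>
          if hi : i.1 = a then hi.symm ▸ y.1 else x.1 ⟨i.1, hi⟩),
        (fun j : {j : Fin m // j ∉ insert a S} =>
          x.2 ⟨j.1, fun h' => j.2 (by rw [h']; exact Finset.mem_insert_self a S)⟩)))
      _ (fun ω => ?_) (hU a)
    refine congrArg₂ Prod.mk ?_ rfl
    funext i
    rcases i with ⟨iv, hiT⟩
    by_cases hi : iv = a
    · subst hi; simp
    · simp [hi]
  have hent : ent p (fun ω => (Uv a ω,
      (((fun i : {j : Fin m // j ∈ T} => Yv i.1 ω),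
        (fun j : {j : Fin m // j ∉ insert a S} => Uv j.1 ω)), (Yv a ω, Qv ω)))) =
      ent p (fun ω => (Uv a ω, (Yv a ω, Qv ω))) +
      ent p (fun ω => (((fun i : {j : Fin m // j ∈ T} => Yv i.1 ω),
        (fun j : {j : Fin m // j ∉ insert a S} => Uv j.1 ω)), (Yv a ω, Qv ω))) -
      ent p (fun ω => (Yv a ω, Qv ω)) :=
    condIndep_ent' hp _ _ _ hci0
  have r1 : ent p (fun ω => ((fun i : {j : Fin m // j ∈ T} => Yv i.1 ω),
      ((fun j : {j : Fin m // j ∉ S} => Uv j.1 ω), Qv ω))) =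
      ent p (fun ω => (Uv a ω,
      (((fun i : {j : Fin m // j ∈ T} => Yv i.1 ω),
        (fun j : {j : Fin m // j ∉ insert a S} => Uv j.1 ω)), (Yv a ω, Qv ω)))) := by
    refine ent_eq_ent p _ _
      (fun x => (x.2.1 ⟨a, haS⟩, ((x.1, (fun j : {j : Fin m // j ∉ insert a S} =>
          x.2.1 ⟨j.1, fun hS => j.2 (Finset.mem_insert_of_mem hS)⟩)), (x.1 ⟨a, haT⟩, x.2.2))))
      (fun y => (y.2.1.1, ((fun j : {j : Fin m // j ∉ S} =>
          if hj : j.1 = a then hj.symm ▸ y.1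
          else y.2.1.2 ⟨j.1, fun hmem => ((Finset.mem_insert.mp hmem).elim hj j.2)⟩),
        y.2.2.2)))
      (fun ω => rfl) (fun ω => ?_)
    refine congrArg₂ Prod.mk rfl (congrArg₂ Prod.mk ?_ rfl)
    funext j
    rcases j with ⟨jv, hjS⟩
    by_cases hj : jv = a
    · subst hj; simp
    · simp [hj]
  have r2 : ent p (fun ω => ((fun i : {j : Fin m // j ∈ T} => Yv i.1 ω),
      ((fun j : {j : Fin m // j ∉ insert a S} => Uv j.1 ω), Qv ω))) =
      ent p (fun ω => (((fun i : {j : Fin m // j ∈ T} => Yv i.1 ω),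
        (fun j : {j : Fin m // j ∉ insert a S} => Uv j.1 ω)), (Yv a ω, Qv ω))) :=
    ent_eq_ent p _ _
      (fun x => ((x.1, x.2.1), (x.1 ⟨a, haT⟩, x.2.2)))
      (fun y => (y.1.1, (y.1.2, y.2.2)))
      (fun ω => rfl) (fun ω => rfl)
  rw [r1, r2]
  linarith [hent]

end main

section main2
set_option linter.unusedSectionVars false
set_option maxHeartbeats 1000000

variable {m : ℕ} {Q : Type} {Y U : Fin m → Type} [Fintype Q]
  [∀ i, Fintype (Y i)] [∀ i, Fintype (U i)]

lemma claimG (p : Ω → ℝ) (Yv : ∀ i, Ω → Y i) (Uv : ∀ i, Ω → U i) (Qv : Ω → Q)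
    (hp : ∀ ω, 0 ≤ p ω)
    (hU : ∀ i, CondIndep p (Uv i)
      (fun ω => ((fun j : {j : Fin m // j ≠ i} => Yv j.1 ω),
                 (fun j : {j : Fin m // j ≠ i} => Uv j.1 ω)))
      (fun ω => (Yv i ω, Qv ω)))
    (T : Finset (Fin m)) :
    ∀ S : Finset (Fin m), S ⊆ T →
    ent p (fun ω => ((fun i : {j : Fin m // j ∈ T} => Yv i.1 ω),
      ((fun i : Fin m => Uv i ω), Qv ω))) -
    ent p (fun ω => ((fun i : {j : Fin m // j ∈ T} => Yv i.1 ω),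
      ((fun j : {j : Fin m // j ∉ S} => Uv j.1 ω), Qv ω))) =
    ∑ i ∈ S, (ent p (fun ω => (Uv i ω, (Yv i ω, Qv ω))) -
      ent p (fun ω => (Yv i ω, Qv ω))) := by
  intro S
  induction S using Finset.induction_on with
  | empty =>
    intro _
    rw [Finset.sum_empty, ent_empty_compl p Yv Uv Qv T]
    ring
  | @insert a S haS ih =>
    intro hsub
    have haT : a ∈ T := hsub (Finset.mem_insert_self a S)
    have hST : S ⊆ T := fun x hx => hsub (Finset.mem_insert_of_mem hx)
    rw [Finset.sum_insert haS]
    have key := step_ent p Yv Uv Qv hp hU haT haS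
    have ihh := ih hST
    linarith [key, ihh]

end main2

section main3
set_option linter.unusedSectionVars false
set_option maxHeartbeats 1000000

variable {m : ℕ} {Ω' Q : Type} {Y U : Fin m → Type} [Fintype Ω'] [Fintype Q]
  [∀ i, Fintype (Y i)] [∀ i, Fintype (U i)]

lemma fPrime_eq (p : Ω' → ℝ) (Yv : ∀ i, Ω' → Y i) (Uv : ∀ i, Ω' → U i) (Qv : Ω' → Q)
    (hp : ∀ ω, 0 ≤ p ω)
    (hU : ∀ i, CondIndep p (Uv i)
      (fun ω => ((fun j : {j : Fin m // j ≠ i} => Yv j.1 ω),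
                 (fun j : {j : Fin m // j ≠ i} => Uv j.1 ω)))
      (fun ω => (Yv i ω, Qv ω)))
    (S : Finset (Fin m)) :
    fPrime p Yv Uv Qv S =
      ent p (fun ω => ((fun i : Fin m => Uv i ω), Qv ω)) -
      ent p (fun ω => ((fun j : {j : Fin m // j ∉ S} => Uv j.1 ω), Qv ω)) -
      ∑ i ∈ S, (ent p (fun ω => (Uv i ω, (Yv i ω, Qv ω))) -
        ent p (fun ω => (Yv i ω, Qv ω))) := by
  have hG := claimG p Yv Uv Qv hp hU S S Finset.Subset.rfl
  have e2 := ent_full_split p Uv Qv S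
  have e3 := ent_full_split_y p Yv Uv Qv S
  simp only [fPrime, condMutInfo]
  linarith [hG, e2, e3]

lemma G_submod (p : Ω' → ℝ) (Uv : ∀ i, Ω' → U i) (Qv : Ω' → Q)
    (hp : IsPmf p) (S T : Finset (Fin m)) :
    ent p (fun ω => ((fun j : {j : Fin m // j ∉ S ∩ T} => Uv j.1 ω), Qv ω)) +
    ent p (fun ω => ((fun j : {j : Fin m // j ∉ S ∪ T} => Uv j.1 ω), Qv ω)) ≤
    ent p (fun ω => ((fun j : {j : Fin m // j ∉ S} => Uv j.1 ω), Qv ω)) +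
    ent p (fun ω => ((fun j : {j : Fin m // j ∉ T} => Uv j.1 ω), Qv ω)) := by
  have h0 := condMutInfo_nonneg' hp
    (fun ω => fun j : {j : Fin m // j ∉ S ∧ j ∈ T} => Uv j.1 ω)
    (fun ω => fun j : {j : Fin m // j ∈ S ∧ j ∉ T} => Uv j.1 ω)
    (fun ω => ((fun j : {j : Fin m // j ∉ S ∧ j ∉ T} => Uv j.1 ω), Qv ω))
  have e1 : ent p (fun ω => ((fun j : {j : Fin m // j ∉ S ∧ j ∈ T} => Uv j.1 ω),
      ((fun j : {j : Fin m // j ∉ S ∧ j ∉ T} => Uv j.1 ω), Qv ω))) =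
      ent p (fun ω => ((fun j : {j : Fin m // j ∉ S} => Uv j.1 ω), Qv ω)) := by
    refine ent_eq_ent p _ _
      (fun x => ((fun j : {j : Fin m // j ∉ S} =>
        if hT : j.1 ∈ T then x.1 ⟨j.1, ⟨j.2, hT⟩⟩ else x.2.1 ⟨j.1, ⟨j.2, hT⟩⟩), x.2.2))
      (fun y => ((fun j : {j : Fin m // j ∉ S ∧ j ∈ T} => y.1 ⟨j.1, j.2.1⟩),
        ((fun j : {j : Fin m // j ∉ S ∧ j ∉ T} => y.1 ⟨j.1, j.2.1⟩), y.2)))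
      (fun ω => ?_) (fun ω => rfl)
    refine congrArg₂ Prod.mk ?_ rfl
    funext j
    by_cases hT : j.1 ∈ T <;> simp [hT]
  have e2 : ent p (fun ω => ((fun j : {j : Fin m // j ∈ S ∧ j ∉ T} => Uv j.1 ω),
      ((fun j : {j : Fin m // j ∉ S ∧ j ∉ T} => Uv j.1 ω), Qv ω))) =
      ent p (fun ω => ((fun j : {j : Fin m // j ∉ T} => Uv j.1 ω), Qv ω)) := by
    refine ent_eq_ent p _ _
      (fun x => ((fun j : {j : Fin m // j ∉ T} =>
        if hS : j.1 ∈ S then x.1 ⟨j.1, ⟨hS, j.2⟩⟩ else x.2.1 ⟨j.1, ⟨hS, j.2⟩⟩), x.2.2))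
      (fun y => ((fun j : {j : Fin m // j ∈ S ∧ j ∉ T} => y.1 ⟨j.1, j.2.2⟩),
        ((fun j : {j : Fin m // j ∉ S ∧ j ∉ T} => y.1 ⟨j.1, j.2.2⟩), y.2)))
      (fun ω => ?_) (fun ω => rfl)
    refine congrArg₂ Prod.mk ?_ rfl
    funext j
    by_cases hS : j.1 ∈ S <;> simp [hS]
  have e3 : ent p (fun ω => ((fun j : {j : Fin m // j ∉ S ∧ j ∈ T} => Uv j.1 ω),
      ((fun j : {j : Fin m // j ∈ S ∧ j ∉ T} => Uv j.1 ω),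
       ((fun j : {j : Fin m // j ∉ S ∧ j ∉ T} => Uv j.1 ω), Qv ω)))) =
      ent p (fun ω => ((fun j : {j : Fin m // j ∉ S ∩ T} => Uv j.1 ω), Qv ω)) := by
    refine ent_eq_ent p _ _
      (fun x => ((fun j : {j : Fin m // j ∉ S ∩ T} =>
        if hS : j.1 ∈ S then
          x.2.1 ⟨j.1, ⟨hS, fun hT => j.2 (Finset.mem_inter.mpr ⟨hS, hT⟩)⟩⟩
        else if hT : j.1 ∈ T then x.1 ⟨j.1, ⟨hS, hT⟩⟩ else x.2.2.1 ⟨j.1, ⟨hS, hT⟩⟩),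
        x.2.2.2))
      (fun y => ((fun j : {j : Fin m // j ∉ S ∧ j ∈ T} =>
          y.1 ⟨j.1, fun hST => j.2.1 (Finset.mem_inter.mp hST).1⟩),
        ((fun j : {j : Fin m // j ∈ S ∧ j ∉ T} =>
          y.1 ⟨j.1, fun hST => j.2.2 (Finset.mem_inter.mp hST).2⟩),
         ((fun j : {j : Fin m // j ∉ S ∧ j ∉ T} =>
          y.1 ⟨j.1, fun hST => j.2.1 (Finset.mem_inter.mp hST).1⟩), y.2))))
      (fun ω => ?_) (fun ω => rfl)
    refine congrArg₂ Prod.mk ?_ rfl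
    funext j
    by_cases hS : j.1 ∈ S <;> by_cases hT : j.1 ∈ T <;> simp [hS, hT]
  have e4 : ent p (fun ω => ((fun j : {j : Fin m // j ∉ S ∧ j ∉ T} => Uv j.1 ω), Qv ω)) =
      ent p (fun ω => ((fun j : {j : Fin m // j ∉ S ∪ T} => Uv j.1 ω), Qv ω)) :=
    ent_eq_ent p _ _
      (fun x => ((fun j : {j : Fin m // j ∉ S ∪ T} =>
        x.1 ⟨j.1, ⟨fun hS => j.2 (Finset.mem_union_left T hS),
          fun hT => j.2 (Finset.mem_union_right S hT)⟩⟩), x.2))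
      (fun y => ((fun j : {j : Fin m // j ∉ S ∧ j ∉ T} =>
        y.1 ⟨j.1, fun hm => ((Finset.mem_union.mp hm).elim j.2.1 j.2.2)⟩), y.2))
      (fun ω => rfl) (fun ω => rfl)
  linarith [h0, e1, e2, e3, e4]

end main3

/-- **Supermodularity of conditional mutual information over encoder subsets**: if each
`U_i` is conditionally independent of all the other variables given `(Y_i, Q)`, then
`S ↦ I(Y_S ; U_S | U_{Sᶜ}, Q)` is supermodular. -/
theorem condMutInfo_supermodular {m : ℕ} {Ω Q : Type} {Y U : Fin m → Type}
    [Fintype Ω] [Fintype Q] [∀ i, Fintype (Y i)] [∀ i, Fintype (U i)]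
    (p : Ω → ℝ) (hp : IsPmf p)
    (Yv : ∀ i, Ω → Y i) (Uv : ∀ i, Ω → U i) (Qv : Ω → Q)
    (hU : ∀ i, CondIndep p (Uv i)
      (fun ω => ((fun j : {j : Fin m // j ≠ i} => Yv j.1 ω),
                 (fun j : {j : Fin m // j ≠ i} => Uv j.1 ω)))
      (fun ω => (Yv i ω, Qv ω))) :
    ∀ S T : Finset (Fin m),
      fPrime p Yv Uv Qv S + fPrime p Yv Uv Qv T ≤
        fPrime p Yv Uv Qv (S ∩ T) + fPrime p Yv Uv Qv (S ∪ T) := by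

  intro S T
  rw [fPrime_eq p Yv Uv Qv hp.1 hU S, fPrime_eq p Yv Uv Qv hp.1 hU T,
    fPrime_eq p Yv Uv Qv hp.1 hU (S ∩ T), fPrime_eq p Yv Uv Qv hp.1 hU (S ∪ T)]
  have hsum : (∑ i ∈ S ∪ T, (ent p (fun ω => (Uv i ω, (Yv i ω, Qv ω))) -
        ent p (fun ω => (Yv i ω, Qv ω)))) +
      (∑ i ∈ S ∩ T, (ent p (fun ω => (Uv i ω, (Yv i ω, Qv ω))) -
        ent p (fun ω => (Yv i ω, Qv ω)))) =
      (∑ i ∈ S, (ent p (fun ω => (Uv i ω, (Yv i ω, Qv ω))) -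
        ent p (fun ω => (Yv i ω, Qv ω)))) +
      (∑ i ∈ T, (ent p (fun ω => (Uv i ω, (Yv i ω, Qv ω))) -
        ent p (fun ω => (Yv i ω, Qv ω)))) :=
    Finset.sum_union_inter
  have hsub := G_submod p Uv Qv hp S T
  linarith [hsum, hsub]

end
end
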